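/- arXiv:2010.14152 — 4 statements merged into one kernel-verified Lean document; each statement's English description precedes it below -/
import Mathlib

section
/- Let L = {a·(1,0) + b·(1/2, √3/2) : a, b ∈ ℤ} be the triangular lattice and let R be a rotation of ℝ² about the origin (an orthogonal linear map with determinant 1). If R maps L onto L, then R⁶ = 1, i.e. R is a rotation by a multiple of 60°. -/
/-- The triangular lattice `L = {a·(1,0) + b·(1/2,√3/2) : a, b ∈ ℤ}` (as `Fin 2 → ℝ`). -/
noncomputable def triLat : Set (Fin 2 → ℝ) :=
  {x | ∃ a b : ℤ, x = (a : ℝ) • ![1, 0] + (b : ℝ) • ![1/2, Real.sqrt 3 / 2]}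

lemma pow_six_rot (c s : ℝ) (h3 : Real.sqrt 3 * Real.sqrt 3 = 3)
    (hcs : (c = 1 ∧ s = 0) ∨ (c = -1 ∧ s = 0) ∨ (c = 1/2 ∧ s = Real.sqrt 3/2) ∨
      (c = 1/2 ∧ s = -(Real.sqrt 3/2)) ∨ (c = -(1/2) ∧ s = Real.sqrt 3/2) ∨
      (c = -(1/2) ∧ s = -(Real.sqrt 3/2))) :
    (!![c, -s; s, c] : Matrix (Fin 2) (Fin 2) ℝ) ^ 6 = 1 := by
  rcases hcs with ⟨hc, hs⟩ | ⟨hc, hs⟩ | ⟨hc, hs⟩ | ⟨hc, hs⟩ | ⟨hc, hs⟩ | ⟨hc, hs⟩ <;>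
      subst hc <;> subst hs
  · have hM : (!![(1:ℝ), -0; 0, 1] : Matrix (Fin 2) (Fin 2) ℝ) = 1 := by
      ext i j; fin_cases i <;> fin_cases j <;> simp [Matrix.one_apply]
    rw [hM, one_pow]
  · have hM : (!![(-1:ℝ), -0; 0, -1] : Matrix (Fin 2) (Fin 2) ℝ) = -1 := by
      ext i j; fin_cases i <;> fin_cases j <;> simp [Matrix.one_apply]
    rw [hM]
    exact Even.neg_one_pow ⟨3, rfl⟩
  · have hcube : (!![(1/2:ℝ), -(Real.sqrt 3/2); Real.sqrt 3/2, 1/2] :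
        Matrix (Fin 2) (Fin 2) ℝ) ^ 3 = -1 := by
      rw [pow_succ, pow_succ, pow_one]
      ext i j
      fin_cases i <;> fin_cases j <;>
        simp [Matrix.mul_apply, Fin.sum_univ_two, Matrix.one_apply] <;>
        first
          | linear_combination (Real.sqrt 3/8) * h3
          | linear_combination (-(Real.sqrt 3)/8) * h3
          | linear_combination ((3:ℝ)/8) * h3
          | linear_combination (-(3:ℝ)/8) * h3
          | linear_combination (Real.sqrt 3/4) * h3
          | linear_combination (-(Real.sqrt 3)/4) * h3
          | nlinarith [h3]
    rw [show (6:ℕ) = 3*2 from rfl, pow_mul, hcube]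
    norm_num
  · have hcube : (!![(1/2:ℝ), -(-(Real.sqrt 3/2)); -(Real.sqrt 3/2), 1/2] :
        Matrix (Fin 2) (Fin 2) ℝ) ^ 3 = -1 := by
      rw [pow_succ, pow_succ, pow_one]
      ext i j
      fin_cases i <;> fin_cases j <;>
        simp [Matrix.mul_apply, Fin.sum_univ_two, Matrix.one_apply] <;>
        first
          | linear_combination (Real.sqrt 3/8) * h3
          | linear_combination (-(Real.sqrt 3)/8) * h3
          | linear_combination ((3:ℝ)/8) * h3
          | linear_combination (-(3:ℝ)/8) * h3
          | linear_combination (Real.sqrt 3/4) * h3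
          | linear_combination (-(Real.sqrt 3)/4) * h3
          | nlinarith [h3]
    rw [show (6:ℕ) = 3*2 from rfl, pow_mul, hcube]
    norm_num
  · have hcube : (!![(-(1/2):ℝ), -(Real.sqrt 3/2); Real.sqrt 3/2, -(1/2)] :
        Matrix (Fin 2) (Fin 2) ℝ) ^ 3 = 1 := by
      rw [pow_succ, pow_succ, pow_one]
      ext i j
      fin_cases i <;> fin_cases j <;>
        simp [Matrix.mul_apply, Fin.sum_univ_two, Matrix.one_apply] <;>
        first
          | linear_combination (Real.sqrt 3/8) * h3
          | linear_combination (-(Real.sqrt 3)/8) * h3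
          | linear_combination ((3:ℝ)/8) * h3
          | linear_combination (-(3:ℝ)/8) * h3
          | linear_combination (Real.sqrt 3/4) * h3
          | linear_combination (-(Real.sqrt 3)/4) * h3
          | nlinarith [h3]
    rw [show (6:ℕ) = 3*2 from rfl, pow_mul, hcube, one_pow]
  · have hcube : (!![(-(1/2):ℝ), -(-(Real.sqrt 3/2)); -(Real.sqrt 3/2), -(1/2)] :
        Matrix (Fin 2) (Fin 2) ℝ) ^ 3 = 1 := by
      rw [pow_succ, pow_succ, pow_one]
      ext i j
      fin_cases i <;> fin_cases j <;>
        simp [Matrix.mul_apply, Fin.sum_univ_two, Matrix.one_apply] <;>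
        first
          | linear_combination (Real.sqrt 3/8) * h3
          | linear_combination (-(Real.sqrt 3)/8) * h3
          | linear_combination ((3:ℝ)/8) * h3
          | linear_combination (-(3:ℝ)/8) * h3
          | linear_combination (Real.sqrt 3/4) * h3
          | linear_combination (-(Real.sqrt 3)/4) * h3
          | nlinarith [h3]
    rw [show (6:ℕ) = 3*2 from rfl, pow_mul, hcube, one_pow]

/-- If a rotation of `ℝ²` about the origin (an orthogonal linear map with
determinant 1) maps the triangular lattice onto itself, then `R⁶ = 1`, i.e. it is a
rotation by a multiple of 60°. -/
theorem rotation_triLat_order_six (R : Matrix (Fin 2) (Fin 2) ℝ)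
    (horth : R.transpose * R = 1) (hdet : R.det = 1)
    (hL : (fun x => R.mulVec x) '' triLat = triLat) : R ^ 6 = 1 := by
  have h3 : Real.sqrt 3 * Real.sqrt 3 = 3 := Real.mul_self_sqrt (by norm_num)
  -- orthogonality entrywise
  have h00 : R 0 0 * R 0 0 + R 1 0 * R 1 0 = 1 := by
    have := congrFun (congrFun horth 0) 0
    simpa [Matrix.mul_apply, Fin.sum_univ_two, Matrix.one_apply] using this
  have h01 : R 0 0 * R 0 1 + R 1 0 * R 1 1 = 0 := by
    have := congrFun (congrFun horth 0) 1
    simpa [Matrix.mul_apply, Fin.sum_univ_two, Matrix.one_apply] using this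
  have hdet2 : R 0 0 * R 1 1 - R 0 1 * R 1 0 = 1 := by
    rw [Matrix.det_fin_two] at hdet; linarith
  have hRc : R 1 1 = R 0 0 := by
    linear_combination (-(R 1 1)) * h00 + (R 1 0) * h01 + (R 0 0) * hdet2
  have hRs : R 0 1 = -R 1 0 := by
    linear_combination (-(R 0 1)) * h00 + (R 0 0) * h01 - (R 1 0) * hdet2
  -- image of e1
  have he1 : R.mulVec ![1, 0] ∈ triLat := by
    rw [← hL]
    exact ⟨![1, 0], ⟨1, 0, by norm_num⟩, rfl⟩
  obtain ⟨a, b, hab⟩ := he1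
  have hmv0 : R.mulVec ![1, 0] 0 = R 0 0 := by
    simp [Matrix.mulVec, dotProduct, Fin.sum_univ_two]
  have hmv1 : R.mulVec ![1, 0] 1 = R 1 0 := by
    simp [Matrix.mulVec, dotProduct, Fin.sum_univ_two]
  have hc : R 0 0 = a + b / 2 := by
    have := congrFun hab 0
    rw [hmv0] at this
    simp at this
    linarith [this]
  have hs : R 1 0 = b * (Real.sqrt 3 / 2) := by
    have := congrFun hab 1
    rw [hmv1] at this
    simp at this
    linarith [this]
  -- integer equation
  have h00' : ((a:ℝ) + b/2) * ((a:ℝ) + b/2) + (b * (Real.sqrt 3/2)) * (b * (Real.sqrt 3/2))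
      = 1 := by rw [← hc, ← hs]; exact h00
  have hint : (a : ℝ) ^ 2 + a * b + b ^ 2 = 1 := by
    linear_combination h00' - ((b:ℝ)^2/4) * h3
  have hintz : a ^ 2 + a * b + b ^ 2 = 1 := by exact_mod_cast hint
  have hb6 : 6 * b ≤ 7 ∧ -7 ≤ 6 * b ∧ 6 * a ≤ 7 ∧ -7 ≤ 6 * a := by
    refine ⟨?_, ?_, ?_, ?_⟩ <;>
      nlinarith [sq_nonneg (2*a + b), sq_nonneg (a + 2*b), sq_nonneg (b-1), sq_nonneg (b+1),
        sq_nonneg (a-1), sq_nonneg (a+1)]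
  have hb : b = -1 ∨ b = 0 ∨ b = 1 := by omega
  have ha : a = -1 ∨ a = 0 ∨ a = 1 := by omega
  -- express R as rotation matrix
  have hR : R = !![R 0 0, -(R 1 0); R 1 0, R 0 0] := by
    ext i j
    fin_cases i <;> fin_cases j <;> simp [hRc, hRs]
  rw [hR]
  apply pow_six_rot _ _ h3
  rw [hc, hs]
  rcases ha with ha' | ha' | ha' <;> rcases hb with hb' | hb' | hb' <;>
      subst ha' <;> subst hb' <;> push_cast
  · omega  -- (-1,-1) impossible
  · exact Or.inr (Or.inl ⟨by norm_num, by norm_num⟩)  -- (-1,0)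
  · exact Or.inr (Or.inr (Or.inr (Or.inr (Or.inl ⟨by norm_num, by norm_num⟩))))  -- (-1,1)
  · exact Or.inr (Or.inr (Or.inr (Or.inr (Or.inr ⟨by norm_num, by norm_num⟩))))  -- (0,-1)
  · omega  -- (0,0) impossible
  · exact Or.inr (Or.inr (Or.inl ⟨by norm_num, by norm_num⟩))  -- (0,1)
  · exact Or.inr (Or.inr (Or.inr (Or.inl ⟨by norm_num, by norm_num⟩)))  -- (1,-1)
  · exact Or.inl ⟨by norm_num, by norm_num⟩  -- (1,0)
  · omega  -- (1,1) impossible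
end

section
/- Let c ∈ ℝ² and let f : ℝ² → ℝ² be the rotation by 90° about c, f(x) = c + J(x − c) where J(x₁,x₂) = (−x₂, x₁). Then f maps ℤ² onto ℤ² if and only if c ∈ ℤ² or c ∈ (1/2, 1/2) + ℤ²; i.e., the possible centers of 90°-rotational symmetries of the square tessellation graph are exactly the lattice points and the centers of the unit squares. -/
/-- The integer lattice `ℤ²` inside `ℝ²` (as `Fin 2 → ℝ`). -/
def intLat : Set (Fin 2 → ℝ) := {x | ∀ i, ∃ n : ℤ, x i = n}

/-- The linear rotation of `ℝ²` by 90° about the origin, `J(x₁,x₂) = (−x₂,x₁)`. -/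
def rot90 : Matrix (Fin 2) (Fin 2) ℝ := !![0, -1; 1, 0]

/-!
Writing `J = rot90`, the rotation about `c` is `x ↦ (c - J c) + J x`. Since `J` permutes `ℤ²`,
it maps `ℤ²` onto the translate `(c - J c) + ℤ²`, which is `ℤ²` exactly when
`c - J c = (c₀ + c₁, c₁ - c₀)` is a lattice point. The parity of `c₀ + c₁ ∈ ℤ` then decides
whether `c ∈ ℤ²` or `c ∈ (1/2, 1/2) + ℤ²`.
-/

open Matrix Pointwise

def intLatAddSubgroup : AddSubgroup (Fin 2 → ℝ) where
  carrier := intLat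
  zero_mem' i := ⟨0, by simp⟩
  add_mem' {x y} hx hy i := by
    obtain ⟨m, hm⟩ := hx i
    obtain ⟨n, hn⟩ := hy i
    exact ⟨m + n, by simp [hm, hn]⟩
  neg_mem' {x} hx i := by
    obtain ⟨m, hm⟩ := hx i
    exact ⟨-m, by simp [hm]⟩

lemma mem_intLat_iff {v : Fin 2 → ℝ} :
    v ∈ intLat ↔ (∃ m : ℤ, v 0 = m) ∧ ∃ n : ℤ, v 1 = n :=
  Fin.forall_fin_two

lemma vadd_intLat_eq_iff (v : Fin 2 → ℝ) : v +ᵥ intLat = intLat ↔ v ∈ intLat := by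
  refine ⟨fun h => ?_, vadd_coe_set (s := intLatAddSubgroup)⟩
  have h0 : (0 : Fin 2 → ℝ) ∈ intLat := intLatAddSubgroup.zero_mem
  simpa [h] using Set.vadd_mem_vadd_set (a := v) h0

lemma rot90_mulVec (v : Fin 2 → ℝ) : rot90 *ᵥ v = ![-v 1, v 0] := by
  ext i
  fin_cases i <;> simp [rot90, mulVec, dotProduct]

lemma rot90_mulVec_mem_intLat {v : Fin 2 → ℝ} (hv : v ∈ intLat) :
    rot90 *ᵥ v ∈ intLat := by
  obtain ⟨⟨m, hm⟩, n, hn⟩ := mem_intLat_iff.1 hv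
  rw [rot90_mulVec, mem_intLat_iff]
  exact ⟨⟨-n, by simp [hn]⟩, m, by simp [hm]⟩

lemma rot90_mulVec_rot90_mulVec (v : Fin 2 → ℝ) : rot90 *ᵥ (rot90 *ᵥ v) = -v := by
  rw [rot90_mulVec, rot90_mulVec]
  ext i
  fin_cases i <;> simp

lemma image_rot90_mulVec_intLat : rot90.mulVec '' intLat = intLat := by
  refine (Set.image_subset_iff.2 fun _ => rot90_mulVec_mem_intLat).antisymm fun v hv => ?_
  refine ⟨rot90 *ᵥ (-v), rot90_mulVec_mem_intLat (intLatAddSubgroup.neg_mem hv), ?_⟩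
  rw [rot90_mulVec_rot90_mulVec, neg_neg]

lemma exists_int_add_and_sub_iff (a b : ℝ) :
    ((∃ m : ℤ, a + b = m) ∧ ∃ n : ℤ, b - a = n) ↔
      ((∃ m : ℤ, a = m) ∧ ∃ n : ℤ, b = n) ∨
        ((∃ m : ℤ, a - 1 / 2 = m) ∧ ∃ n : ℤ, b - 1 / 2 = n) := by
  constructor
  · rintro ⟨⟨m, hm⟩, n, hn⟩
    rcases Int.even_or_odd' (m + n) with ⟨k, hk | hk⟩
    · have hk' : (m : ℝ) + n = 2 * k := by exact_mod_cast hk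
      exact .inl ⟨⟨k - n, by push_cast; linarith⟩, k, by linarith⟩
    · have hk' : (m : ℝ) + n = 2 * k + 1 := by exact_mod_cast hk
      exact .inr ⟨⟨k - n, by push_cast; linarith⟩, k, by linarith⟩
  · rintro (⟨⟨m, hm⟩, n, hn⟩ | ⟨⟨m, hm⟩, n, hn⟩)
    · exact ⟨⟨m + n, by push_cast; linarith⟩, n - m, by push_cast; linarith⟩
    · exact ⟨⟨m + n + 1, by push_cast; linarith⟩, n - m, by push_cast; linarith⟩

lemma sub_rot90_mulVec_mem_intLat_iff (c : Fin 2 → ℝ) :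
    c - rot90 *ᵥ c ∈ intLat ↔ c ∈ intLat ∨ c - ![1/2, 1/2] ∈ intLat := by
  simp only [mem_intLat_iff, rot90_mulVec, Pi.sub_apply, cons_val_zero, cons_val_one,
    sub_neg_eq_add]
  exact exists_int_add_and_sub_iff (c 0) (c 1)

/-- The rotation by 90° about `c`, `f(x) = c + J(x − c)`, maps `ℤ²` onto
`ℤ²` iff `c ∈ ℤ²` or `c ∈ (1/2,1/2) + ℤ²`: the possible centers of 90°-rotational
symmetries of the square tessellation are exactly the lattice points and the centers
of the unit squares. -/
theorem rotation90_center_intLat (c : Fin 2 → ℝ) :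
    (fun x => c + rot90.mulVec (x - c)) '' intLat = intLat ↔
      c ∈ intLat ∨ (c - ![1/2, 1/2]) ∈ intLat := by
  have hf : (fun x => c + rot90.mulVec (x - c)) =
      (fun x => (c - rot90 *ᵥ c) +ᵥ x) ∘ rot90.mulVec := by
    ext x : 1
    simp only [Function.comp_apply, vadd_eq_add, mulVec_sub]
    abel
  rw [hf, Set.image_comp, image_rot90_mulVec_intLat, Set.image_vadd, vadd_intLat_eq_iff,
    sub_rot90_mulVec_mem_intLat_iff]
end

section
/- Let L = {a·(1,0) + b·(1/2, √3/2) : a, b ∈ ℤ} be the triangular lattice, let c ∈ ℝ², and let f be the rotation by 60° about c, f(x) = c + R(x − c) where R is the rotation by 60° about the origin. Then f maps L onto L if and only if c ∈ L; i.e., the possible centers of 60°-rotational symmetries of the triangular tessellation are exactly the lattice points. -/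
/-- The linear rotation of `ℝ²` by 60° about the origin. -/
noncomputable def rot60 : Matrix (Fin 2) (Fin 2) ℝ :=
  !![1/2, -(Real.sqrt 3 / 2); Real.sqrt 3 / 2, 1/2]

theorem AddSubgroup.image_add_apply_sub_eq_self_iff {M : Type*} [AddCommGroup M]
    (Λ : AddSubgroup M) (A : M →+ M) (hAΛ : ∀ x ∈ Λ, A x ∈ Λ) (hA : ∀ x, A (x - A x) = x)
    (c : M) : (fun x => c + A (x - c)) '' Λ = Λ ↔ c ∈ Λ := by
  constructor
  · intro h
    have h0 : c - A c ∈ Λ := by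
      have : c + A (0 - c) ∈ (fun x => c + A (x - c)) '' Λ := ⟨0, Λ.zero_mem, rfl⟩
      rwa [h, zero_sub, map_neg, ← sub_eq_add_neg] at this
    rw [← hA c]
    exact hAΛ _ h0
  · intro hc
    refine Set.Subset.antisymm ?_ fun y hy => ⟨c + (y - c - A (y - c)), ?_, ?_⟩
    · rintro _ ⟨x, hx, rfl⟩
      exact Λ.add_mem hc (hAΛ _ (Λ.sub_mem hx hc))
    · have hyc := Λ.sub_mem hy hc
      exact Λ.add_mem hc (Λ.sub_mem hyc (hAΛ _ hyc))
    · simp only [add_sub_cancel_left, hA, add_sub_cancel]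

open Matrix

noncomputable def triLattice : AddSubgroup (Fin 2 → ℝ) :=
  (Submodule.span ℤ {![1, 0], ![1/2, Real.sqrt 3 / 2]}).toAddSubgroup

theorem coe_triLattice : (triLattice : Set (Fin 2 → ℝ)) = triLat := by
  ext x
  simp only [triLattice, Submodule.coe_toAddSubgroup, SetLike.mem_coe, Submodule.mem_span_pair,
    triLat, Set.mem_ofPred_eq, Int.cast_smul_eq_zsmul, eq_comm]

theorem rot60_mul_self : rot60 * rot60 = rot60 - 1 := by
  rw [rot60, one_fin_two]
  ext i j
  fin_cases i <;> fin_cases j <;> simp [mul_apply, Fin.sum_univ_two] <;> ring_nf <;> norm_num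

theorem rot60_mulVec_sub_mulVec (x : Fin 2 → ℝ) : rot60 *ᵥ (x - rot60 *ᵥ x) = x := by
  rw [mulVec_sub, mulVec_mulVec, rot60_mul_self, sub_mulVec, one_mulVec, sub_sub_cancel]

theorem rot60_mulVec_mem_triLattice {x : Fin 2 → ℝ} (hx : x ∈ triLattice) :
    rot60 *ᵥ x ∈ triLattice := by
  obtain ⟨a, b, rfl⟩ := Submodule.mem_span_pair.mp hx
  have he₁ : rot60 *ᵥ ![1, 0] = ![1/2, Real.sqrt 3 / 2] := by
    ext i; fin_cases i <;> simp [rot60]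
  have he₂ : rot60 *ᵥ ![1/2, Real.sqrt 3 / 2] = ![1/2, Real.sqrt 3 / 2] - ![1, 0] := by
    ext i; fin_cases i <;> simp [rot60] <;> ring_nf; norm_num
  refine Submodule.mem_span_pair.mpr ⟨-b, a + b, ?_⟩
  rw [mulVec_add, mulVec_smul, mulVec_smul, he₁, he₂]
  module

/-- The rotation by 60° about `c`, `f(x) = c + R(x − c)`, maps the
triangular lattice onto itself iff `c ∈ L`: the possible centers of 60°-rotational
symmetries of the triangular tessellation are exactly the lattice points. -/
theorem rotation60_center_triLat (c : Fin 2 → ℝ) :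
    (fun x => c + rot60.mulVec (x - c)) '' triLat = triLat ↔ c ∈ triLat := by
  rw [← coe_triLattice]
  exact triLattice.image_add_apply_sub_eq_self_iff (mulVecLin rot60).toAddMonoidHom
    (fun _ => rot60_mulVec_mem_triLattice) rot60_mulVec_sub_mulVec c
end

section
/- Every graph automorphism φ of the square grid graph G_S is an affine map: there exist a 2×2 signed permutation matrix A and a vector b ∈ ℤ² such that φ(x) = A·x + b for all x ∈ ℤ². In particular every automorphism of G_S extends to an isometry of the Euclidean plane, namely a translation, a rotation by a multiple of 90°, a reflection, or a glide reflection. -/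
/-!
Two distinct neighbours `b`, `c` of a vertex `a` of the grid have a second common neighbour
exactly when `a`, `b`, `c` are three corners of a unit square, and it is then the fourth corner
`b + c - a`. Hence an automorphism `φ` maps unit squares to unit squares, and straight paths of
length two to straight paths (the middle vertex being the only common neighbour of the ends).
So the differences `φ (x + e) - φ x` along the two coordinate directions `e` do not depend on
`x`, `φ` is affine, and its linear part sends the basis to two perpendicular unit vectors.
-/

/-- The square grid graph `G_S`: vertex set `ℤ × ℤ`, with `u ~ v` iff
`|u₁ − v₁| + |u₂ − v₂| = 1`. -/
def GS : SimpleGraph (ℤ × ℤ) where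
  Adj u v := |u.1 - v.1| + |u.2 - v.2| = 1
  symm := by
    constructor
    intro u v h
    rwa [abs_sub_comm u.1 v.1, abs_sub_comm u.2 v.2] at h
  loopless := by
    constructor
    intro u h
    simp at h

open AddConstMapClass in
open scoped AddConstMap in
theorem eq_add_zsmul_add_zsmul {G : Type*} [AddGroup G] (g : ℤ × ℤ → G) (u v : G)
    (hu : ∀ x, g (x + (1, 0)) = g x + u) (hv : ∀ x, g (x + (0, 1)) = g x + v) (x : ℤ × ℤ) :
    g x = g 0 + x.1 • u + x.2 • v := by
  let gu : ℤ × ℤ →+c[(1, 0), u] G := ⟨g, hu⟩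
  let gv : ℤ × ℤ →+c[(0, 1), v] G := ⟨g, hv⟩
  calc g x = g (0 + x.1 • (1, 0) + x.2 • (0, 1)) := by congr 1; ext <;> simp
    _ = g (0 + x.1 • (1, 0)) + x.2 • v := map_add_zsmul gv _ x.2
    _ = g 0 + x.1 • u + x.2 • v := congrArg (· + x.2 • v) (map_add_zsmul gu 0 x.1)

def Matrix.IsSignedPerm {n R : Type*} [DecidableEq n] [Ring R] (A : Matrix n n R) : Prop :=
  ∃ σ : Equiv.Perm n, ∃ ε : n → R, (∀ i, ε i = 1 ∨ ε i = -1) ∧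
    ∀ i j, A i j = if j = σ i then ε i else 0

namespace GS

theorem adj_iff_coords {u v : ℤ × ℤ} : GS.Adj u v ↔
    (v.1 = u.1 + 1 ∨ v.1 = u.1 - 1) ∧ v.2 = u.2 ∨ v.1 = u.1 ∧ (v.2 = u.2 + 1 ∨ v.2 = u.2 - 1) := by
  change |u.1 - v.1| + |u.2 - v.2| = 1 ↔ _
  rw [Int.abs_eq_natAbs, Int.abs_eq_natAbs]
  omega

theorem adj_iff_adj_zero_sub {u v : ℤ × ℤ} : GS.Adj u v ↔ GS.Adj 0 (v - u) := by
  simp only [adj_iff_coords, Prod.fst_zero, Prod.snd_zero, Prod.fst_sub, Prod.snd_sub]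
  omega

theorem adj_add_iff {x p : ℤ × ℤ} : GS.Adj x (x + p) ↔ GS.Adj 0 p := by
  rw [adj_iff_adj_zero_sub, add_sub_cancel_left]

theorem eq_or_eq_add_sub_of_adj {a b c d : ℤ × ℤ} (hab : GS.Adj a b) (hac : GS.Adj a c)
    (hbc : b ≠ c) (hdb : GS.Adj d b) (hdc : GS.Adj d c) : d = a ∨ d = b + c - a := by
  rw [adj_iff_coords] at hab hac hdb hdc
  simp only [ne_eq, Prod.ext_iff, Prod.fst_add, Prod.snd_add, Prod.fst_sub, Prod.snd_sub] at *
  omega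

theorem adj_add_sub_iff {a b c : ℤ × ℤ} : GS.Adj (a + (c - b)) a ↔ GS.Adj b c := by
  rw [SimpleGraph.adj_comm, adj_add_iff, ← adj_iff_adj_zero_sub]

theorem adj_zero_one_zero : GS.Adj 0 (1, 0) := by simp [adj_iff_coords]

theorem adj_zero_zero_one : GS.Adj 0 (0, 1) := by simp [adj_iff_coords]

theorem isSignedPerm_of_adj_zero {u v : ℤ × ℤ} (hu : GS.Adj 0 u) (hv : GS.Adj 0 v)
    (huv : v ≠ u) (huv' : v ≠ -u) : Matrix.IsSignedPerm !![u.1, v.1; u.2, v.2] := by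
  rw [adj_iff_coords] at hu hv
  simp only [ne_eq, Prod.ext_iff, Prod.fst_neg, Prod.snd_neg, Prod.fst_zero, Prod.snd_zero,
    zero_add, zero_sub] at hu hv huv huv'
  obtain ⟨hu2, hv1, hu1, hv2⟩ | ⟨hu1, hv2, hu2, hv1⟩ :
      (u.2 = 0 ∧ v.1 = 0 ∧ (u.1 = 1 ∨ u.1 = -1) ∧ (v.2 = 1 ∨ v.2 = -1)) ∨
      (u.1 = 0 ∧ v.2 = 0 ∧ (u.2 = 1 ∨ u.2 = -1) ∧ (v.1 = 1 ∨ v.1 = -1)) := by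
    omega
  · exact ⟨1, ![u.1, v.2], by simp [Fin.forall_fin_two, hu1, hv2], by
      simp [Fin.forall_fin_two, hu2, hv1]⟩
  · exact ⟨Equiv.swap 0 1, ![v.1, u.2], by simp [Fin.forall_fin_two, hu2, hv1], by
      simp [Fin.forall_fin_two, hu1, hv2]⟩

variable (φ : GS ≃g GS)

theorem map_add_add_sub_map_add {p : ℤ × ℤ} (hp : GS.Adj 0 p) (x : ℤ × ℤ) :
    φ (x + p + p) - φ (x + p) = φ (x + p) - φ x := by
  have h₁ : GS.Adj (x + p) x := (adj_add_iff.2 hp).symm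
  have h₂ : GS.Adj (x + p) (x + p + p) := adj_add_iff.2 hp
  have hne : x ≠ x + p + p := by
    rw [adj_iff_coords] at hp
    simp only [ne_eq, Prod.ext_iff, Prod.fst_add, Prod.snd_add, Prod.fst_zero, Prod.snd_zero] at hp ⊢
    omega
  set w := φ.symm (φ x + φ (x + p + p) - φ (x + p))
  have hw₁ : GS.Adj w x := φ.map_adj_iff.1 <| by
    rw [RelIso.apply_symm_apply, add_sub_assoc, adj_add_sub_iff]
    exact φ.map_adj_iff.2 h₂
  have hw₂ : GS.Adj w (x + p + p) := φ.map_adj_iff.1 <| by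
    rw [RelIso.apply_symm_apply, add_sub_right_comm, add_comm, adj_add_sub_iff]
    exact φ.map_adj_iff.2 h₁
  have hw : w = x + p := by
    rcases eq_or_eq_add_sub_of_adj h₁ h₂ hne hw₁ hw₂ with h | h
    · exact h
    · rw [h]; abel
  rw [RelIso.symm_apply_eq] at hw
  linear_combination hw

theorem map_add_add_of_adj_zero {p q : ℤ × ℤ} (hp : GS.Adj 0 p) (hq : GS.Adj 0 q) (hpq : p ≠ q)
    (hpq' : p + q ≠ 0) (x : ℤ × ℤ) : φ (x + p + q) = φ (x + p) + φ (x + q) - φ x := by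
  have hx : x + p + q ≠ x := by rwa [add_assoc, ne_eq, add_eq_left]
  refine (eq_or_eq_add_sub_of_adj (φ.map_adj_iff.2 (adj_add_iff.2 hp))
    (φ.map_adj_iff.2 (adj_add_iff.2 hq)) (φ.injective.ne (by simpa using hpq))
    (φ.map_adj_iff.2 (adj_add_iff.2 hq).symm) (φ.map_adj_iff.2 ?_)).resolve_left
    (φ.injective.ne hx)
  rw [add_right_comm]
  exact (adj_add_iff.2 hp).symm

theorem map_add_sub_map_eq {p : ℤ × ℤ} (hp : p = (1, 0) ∨ p = (0, 1)) (x : ℤ × ℤ) :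
    φ (x + p) - φ x = φ p - φ 0 := by
  suffices ∀ y, φ (y + (1, 0) + p) - φ (y + (1, 0)) = φ (y + p) - φ y ∧
      φ (y + (0, 1) + p) - φ (y + (0, 1)) = φ (y + p) - φ y by
    simpa using eq_add_zsmul_add_zsmul (fun y => φ (y + p) - φ y) 0 0
      (fun y => by simpa using (this y).1) (fun y => by simpa using (this y).2) x
  intro y
  have hsq := map_add_add_of_adj_zero φ adj_zero_one_zero adj_zero_zero_one (by simp) (by simp) y
  rcases hp with rfl | rfl
  · exact ⟨map_add_add_sub_map_add φ adj_zero_one_zero y, by rw [add_right_comm, hsq]; abel⟩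
  · exact ⟨by rw [hsq]; abel, map_add_add_sub_map_add φ adj_zero_zero_one y⟩

end GS

/-- Every graph automorphism of the square grid graph is affine: it is
given by `x ↦ A·x + b` for a 2×2 signed permutation matrix `A` and a vector `b ∈ ℤ²`.
(In particular it extends to an isometry of the Euclidean plane: a translation, a
rotation by a multiple of 90°, a reflection, or a glide reflection.) -/
theorem square_grid_automorphism_affine (φ : GS ≃g GS) :
    ∃ A : Matrix (Fin 2) (Fin 2) ℤ,
      (∃ σ : Equiv.Perm (Fin 2), ∃ ε : Fin 2 → ℤ, (∀ i, ε i = 1 ∨ ε i = -1) ∧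
        ∀ i j, A i j = if j = σ i then ε i else 0) ∧
      ∃ b : ℤ × ℤ, ∀ x : ℤ × ℤ,
        φ x = (A 0 0 * x.1 + A 0 1 * x.2 + b.1, A 1 0 * x.1 + A 1 1 * x.2 + b.2) := by
  set U := φ (1, 0) - φ 0
  set V := φ (0, 1) - φ 0
  have hφ : ∀ x, φ x = φ 0 + x.1 • U + x.2 • V :=
    eq_add_zsmul_add_zsmul φ U V
      (fun x => eq_add_of_sub_eq' (GS.map_add_sub_map_eq φ (.inl rfl) x))
      (fun x => eq_add_of_sub_eq' (GS.map_add_sub_map_eq φ (.inr rfl) x))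
  have hU : GS.Adj 0 U := GS.adj_iff_adj_zero_sub.1 (φ.map_adj_iff.2 GS.adj_zero_one_zero)
  have hV : GS.Adj 0 V := GS.adj_iff_adj_zero_sub.1 (φ.map_adj_iff.2 GS.adj_zero_one_zero)
  have hVU : V ≠ U := fun h => by simpa using φ.injective (sub_left_injective h)
  have hVU' : V ≠ -U := fun h => by
    have : φ (0, 1) = φ (-1, 0) := by rw [hφ (0, 1), hφ (-1, 0), h]; simp
    simpa using φ.injective this
  refine ⟨!![U.1, V.1; U.2, V.2], GS.isSignedPerm_of_adj_zero hU hV hVU hVU', φ 0, fun x => ?_⟩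
  rw [hφ x]
  ext
  all_goals
    simp only [Prod.fst_add, Prod.snd_add, Prod.smul_fst, Prod.smul_snd, smul_eq_mul,
      Matrix.of_apply, Matrix.cons_val', Matrix.cons_val_zero, Matrix.cons_val_one,
      Matrix.cons_val_fin_one]
    ring
end
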